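/- Fix τ ∈ ℕ. There exists a constant c_τ > 0 such that for every n ∈ ℕ and every nonzero element w = Σ_{f ∈ P_τ*} c_f √f with integer coefficients satisfying |c_f| ≤ n, one has ‖w‖ ≥ c_τ · n^{-(2^τ − 1)}, where ‖·‖ denotes distance to the nearest integer. -/

import Mathlib

/-- The `i`-th prime (0-indexed: `nthPrime 0 = 2`). -/
noncomputable def nthPrime (i : ℕ) : ℕ := Nat.nth Nat.Prime i

/-- The squarefree divisor of `p_1 ⋯ p_τ` indexed by `s ∈ {0,1}^τ`. -/
noncomputable def sqfDiv (τ : ℕ) (s : Fin τ → Bool) : ℕ :=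
  ∏ j, if s j then nthPrime j else 1

/-- Distance from a real number to the nearest integer. -/
noncomputable def distNearestInt (x : ℝ) : ℝ := |x - round x|

/-
Write `p_j = nthPrime j`. The numbers `√(sqfDiv τ s)` are linearly independent over `ℚ`, because
`√p_τ` does not lie in the field generated by `√p_0, …, √p_(τ-1)`. Let `d` be the integer nearest
to `w` and `F = ∑ c_s ∏_{j ∈ s} X_j - d`, so that `w - d = F(√p_0, …, √p_(τ-1))`. The product of
the `2^τ` conjugates `F(±√p_0, …, ±√p_(τ-1))` is invariant under every sign change, so only even
powers of the `√p_j` occur in it and it is an integer; by linear independence no conjugate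
vanishes. All conjugates are `O(n)`, hence `1 ≤ |w - d| · O(n)^(2^τ - 1)`.
-/

section QuadraticExtension

variable {F : Type*} [Field F] {K : Subfield F} {α : F}

lemma exists_inv_add_mul_eq (hα : α ^ 2 ∈ K) (hαK : α ∉ K) {a b : F} (ha : a ∈ K) (hb : b ∈ K) :
    ∃ a' ∈ K, ∃ b' ∈ K, (a + b * α)⁻¹ = a' + b' * α := by
  rcases eq_or_ne b 0 with rfl | hb0
  · exact ⟨a⁻¹, inv_mem ha, 0, zero_mem _, by simp⟩
  set D := a ^ 2 - α ^ 2 * b ^ 2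
  have hD : D ≠ 0 := by
    intro hD
    have : (a / b) ^ 2 = α ^ 2 := by field_simp; linear_combination hD
    rcases sq_eq_sq_iff_eq_or_eq_neg.1 this with h | h
    · exact hαK (h ▸ div_mem ha hb)
    · exact hαK (neg_neg α ▸ h ▸ neg_mem (div_mem ha hb))
  have hDK : D ∈ K := sub_mem (pow_mem ha 2) (mul_mem hα (pow_mem hb 2))
  refine ⟨a / D, div_mem ha hDK, -b / D, div_mem (neg_mem hb) hDK, ?_⟩
  refine inv_eq_of_mul_eq_one_right ?_
  field_simp
  ring

variable (K α)

def quadraticExtension (hα : α ^ 2 ∈ K) (hαK : α ∉ K) : Subfield F where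
  carrier := {x | ∃ a ∈ K, ∃ b ∈ K, x = a + b * α}
  one_mem' := ⟨1, one_mem _, 0, zero_mem _, by ring⟩
  zero_mem' := ⟨0, zero_mem _, 0, zero_mem _, by ring⟩
  add_mem' := by
    rintro _ _ ⟨a, ha, b, hb, rfl⟩ ⟨a', ha', b', hb', rfl⟩
    exact ⟨a + a', add_mem ha ha', b + b', add_mem hb hb', by ring⟩
  neg_mem' := by
    rintro _ ⟨a, ha, b, hb, rfl⟩
    exact ⟨-a, neg_mem ha, -b, neg_mem hb, by ring⟩
  mul_mem' := by
    rintro _ _ ⟨a, ha, b, hb, rfl⟩ ⟨a', ha', b', hb', rfl⟩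
    exact ⟨a * a' + b * b' * α ^ 2, add_mem (mul_mem ha ha') (mul_mem (mul_mem hb hb') hα),
      a * b' + a' * b, add_mem (mul_mem ha hb') (mul_mem ha' hb), by ring⟩
  inv_mem' := by
    rintro _ ⟨a, ha, b, hb, rfl⟩
    exact exists_inv_add_mul_eq hα hαK ha hb

variable {K α}

theorem exists_add_mul_of_mem_closure_insert (hα : α ^ 2 ∈ K) {x : F}
    (hx : x ∈ Subfield.closure (insert α (K : Set F))) : ∃ a ∈ K, ∃ b ∈ K, x = a + b * α := by
  by_cases hαK : α ∈ K
  · exact ⟨x, Subfield.closure_le.2 (Set.insert_subset hαK le_rfl) hx, 0, zero_mem _, by ring⟩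
  have hαS : α ∈ quadraticExtension K α hα hαK := ⟨0, zero_mem _, 1, one_mem _, by ring⟩
  have hKS : (K : Set F) ⊆ quadraticExtension K α hα hαK :=
    fun y hy => ⟨y, hy, 0, zero_mem _, by ring⟩
  exact Subfield.closure_le.2 (Set.insert_subset hαS hKS) hx

theorem notMem_closure_insert_of_sq_mem [NeZero (2 : F)] {β : F} (hα : α ^ 2 ∈ K)
    (hβ : β ^ 2 ∈ K) (hαK : α ∉ K) (hβK : β ∉ K) (hαβK : α * β ∉ K) :
    β ∉ Subfield.closure (insert α (K : Set F)) := by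
  intro hmem
  obtain ⟨a, ha, b, hb, rfl⟩ := exists_add_mul_of_mem_closure_insert hα hmem
  rcases eq_or_ne a 0 with rfl | ha0
  · exact hαβK (by simpa [sq, mul_left_comm] using mul_mem hb hα)
  rcases eq_or_ne b 0 with rfl | hb0
  · exact hβK (by simpa using ha)
  have : α = ((a + b * α) ^ 2 - a ^ 2 - b ^ 2 * α ^ 2) / (2 * a * b) := by
    field_simp
    ring
  refine hαK (this ▸ ?_)
  exact div_mem (sub_mem (sub_mem hβ (pow_mem ha 2)) (mul_mem (pow_mem hb 2) hα))
    (mul_mem (mul_mem (ofNat_mem _ 2) ha) hb)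

end QuadraticExtension

lemma nthPrime_prime (i : ℕ) : (nthPrime i).Prime := Nat.prime_nth_prime i

lemma nthPrime_dvd_nthPrime_iff {i j : ℕ} : nthPrime i ∣ nthPrime j ↔ i = j := by
  rw [Nat.prime_dvd_prime_iff_eq (nthPrime_prime i) (nthPrime_prime j)]
  exact (Nat.nth_injective Nat.infinite_setOfPred_prime).eq_iff

lemma sq_sqrt_natCast_mem (K : Subfield ℝ) (m : ℕ) : √(m : ℝ) ^ 2 ∈ K := by
  rw [Real.sq_sqrt (Nat.cast_nonneg m)]
  exact natCast_mem K m

lemma irrational_sqrt_of_squarefree {m : ℕ} (hm : 1 < m) (hsf : Squarefree m) :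
    Irrational √(m : ℝ) := by
  refine irrational_sqrt_natCast_iff.2 fun ⟨r, hr⟩ => hm.ne' ?_
  rw [hr, Nat.isUnit_iff.1 (hsf r (hr ▸ dvd_rfl))]

noncomputable def sqrtPrimeField (τ : ℕ) : Subfield ℝ :=
  Subfield.closure ((fun j => √(nthPrime j : ℝ)) '' Set.Iio τ)

lemma sqrt_nthPrime_mem_sqrtPrimeField {i τ : ℕ} (h : i < τ) :
    √(nthPrime i : ℝ) ∈ sqrtPrimeField τ :=
  Subfield.subset_closure ⟨i, h, rfl⟩

lemma sqrtPrimeField_succ_le (τ : ℕ) :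
    sqrtPrimeField (τ + 1) ≤
      Subfield.closure (insert √(nthPrime τ : ℝ) (sqrtPrimeField τ : Set ℝ)) := by
  refine Subfield.closure_le.2 ?_
  rintro _ ⟨j, hj, rfl⟩
  rcases Nat.lt_succ_iff_lt_or_eq.1 hj with hj | rfl
  · exact Subfield.subset_closure (Set.mem_insert_of_mem _ (sqrt_nthPrime_mem_sqrtPrimeField hj))
  · exact Subfield.subset_closure (Set.mem_insert _ _)

theorem sqrt_notMem_sqrtPrimeField {τ m : ℕ} (hm : 1 < m) (hsf : Squarefree m)
    (hcop : ∀ j < τ, ¬ nthPrime j ∣ m) : √(m : ℝ) ∉ sqrtPrimeField τ := by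
  induction τ generalizing m with
  | zero =>
    intro hmem
    have hbot : sqrtPrimeField 0 = ⊥ := by simp [sqrtPrimeField]
    obtain ⟨q, hq⟩ := RingHom.mem_fieldRange.1
      ((bot_le : ⊥ ≤ (Rat.castHom ℝ).fieldRange) (hbot ▸ hmem))
    exact irrational_sqrt_of_squarefree hm hsf ⟨q, hq⟩
  | succ τ ih =>
    have hp := nthPrime_prime τ
    have hpcop : ∀ j < τ, ¬ nthPrime j ∣ nthPrime τ := fun j hj h =>
      hj.ne (nthPrime_dvd_nthPrime_iff.1 h)
    have hmcop : ∀ j < τ, ¬ nthPrime j ∣ m := fun j hj => hcop j (Nat.lt_succ_of_lt hj)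
    have hpmK : √(nthPrime τ : ℝ) * √(m : ℝ) ∉ sqrtPrimeField τ := by
      have hpm : (nthPrime τ).Coprime m := hp.coprime_iff_not_dvd.2 (hcop τ τ.lt_succ_self)
      rw [← Real.sqrt_mul (Nat.cast_nonneg _), ← Nat.cast_mul]
      refine ih (hp.one_lt.trans_le (Nat.le_mul_of_pos_right _ (by omega)))
        ((Nat.squarefree_mul hpm).2 ⟨hp.squarefree, hsf⟩) fun j hj h => ?_
      rcases (nthPrime_prime j).dvd_mul.1 h with h | h
      · exact hpcop j hj h
      · exact hmcop j hj h
    exact fun hmem => notMem_closure_insert_of_sq_mem (sq_sqrt_natCast_mem _ _)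
      (sq_sqrt_natCast_mem _ _) (ih hp.one_lt hp.squarefree hpcop) (ih hm hsf hmcop) hpmK
      (sqrtPrimeField_succ_le τ hmem)

lemma sqrt_nthPrime_notMem_sqrtPrimeField (τ : ℕ) :
    √(nthPrime τ : ℝ) ∉ sqrtPrimeField τ :=
  sqrt_notMem_sqrtPrimeField (nthPrime_prime τ).one_lt (nthPrime_prime τ).squarefree
    fun _ hj h => hj.ne (nthPrime_dvd_nthPrime_iff.1 h)

lemma sqrt_sqfDiv (τ : ℕ) (s : Fin τ → Bool) :
    √(sqfDiv τ s : ℝ) = ∏ j, if s j then √(nthPrime j : ℝ) else 1 := by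
  have hnn : 0 ≤ ∏ j, if s j then √(nthPrime j : ℝ) else 1 :=
    Finset.prod_nonneg fun j _ => by split <;> positivity
  rw [← Real.sqrt_sq hnn, ← Finset.prod_pow]
  congr 1
  simp only [sqfDiv, Nat.cast_prod, Nat.cast_ite, Nat.cast_one, ite_pow, one_pow,
    Real.sq_sqrt (Nat.cast_nonneg _)]

lemma sqrt_sqfDiv_snoc {τ : ℕ} (t : Fin τ → Bool) (b : Bool) :
    √(sqfDiv (τ + 1) (Fin.snoc t b) : ℝ) =
      √(sqfDiv τ t : ℝ) * if b then √(nthPrime τ : ℝ) else 1 := by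
  simp [sqrt_sqfDiv, Fin.prod_univ_castSucc]

lemma sqrt_sqfDiv_mem_sqrtPrimeField {τ : ℕ} (s : Fin τ → Bool) :
    √(sqfDiv τ s : ℝ) ∈ sqrtPrimeField τ := by
  rw [sqrt_sqfDiv]
  refine prod_mem fun j _ => ?_
  split
  · exact sqrt_nthPrime_mem_sqrtPrimeField j.isLt
  · exact one_mem _

lemma sum_fun_fin_succ_bool {M : Type*} [AddCommMonoid M] {n : ℕ} (f : (Fin (n + 1) → Bool) → M) :
    ∑ s, f s = ∑ t, f (Fin.snoc t false) + ∑ t, f (Fin.snoc t true) := by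
  rw [← (Fin.snocEquiv fun _ => Bool).sum_comp, Fintype.sum_prod_type, Fintype.sum_bool, add_comm]
  rfl

theorem linearIndependent_sqrt_sqfDiv (τ : ℕ) :
    LinearIndependent ℚ fun s : Fin τ → Bool => √(sqfDiv τ s : ℝ) := by
  rw [Fintype.linearIndependent_iff]
  induction τ with
  | zero =>
    intro g hg s
    rw [Fintype.sum_unique, sqrt_sqfDiv, Finset.univ_eq_empty, Finset.prod_empty,
      smul_eq_zero] at hg
    exact Subsingleton.elim s _ ▸ hg.resolve_right one_ne_zero
  | succ τ ih =>
    intro g hg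
    set A := ∑ t, g (Fin.snoc t false) • √(sqfDiv τ t : ℝ)
    set B := ∑ t, g (Fin.snoc t true) • √(sqfDiv τ t : ℝ)
    have hAB : A + B * √(nthPrime τ : ℝ) = 0 := by
      rw [← hg, sum_fun_fin_succ_bool]
      simp only [sqrt_sqfDiv_snoc, if_true, Bool.false_eq_true, if_false, mul_one, Finset.sum_mul,
        smul_mul_assoc, A, B]
    have hmem : ∀ b, ∑ t, g (Fin.snoc t b) • √(sqfDiv τ t : ℝ) ∈ sqrtPrimeField τ :=
      fun b => sum_mem fun t _ => by
        rw [Rat.smul_def]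
        exact mul_mem (SubfieldClass.ratCast_mem _ _) (sqrt_sqfDiv_mem_sqrtPrimeField t)
    have hB : B = 0 := by
      by_contra hB
      refine sqrt_nthPrime_notMem_sqrtPrimeField τ ?_
      rw [show √(nthPrime τ : ℝ) = -A / B by field_simp; linear_combination hAB]
      exact div_mem (neg_mem (hmem false)) (hmem true)
    have hA : A = 0 := by simpa [hB] using hAB
    intro s
    rw [← Fin.snoc_init_self s]
    cases s (Fin.last τ)
    · exact ih _ hA _
    · exact ih _ hB _

open MvPolynomial

section SignFlip

variable {σ R A : Type*} [CommRing R] [CommRing A] [Algebra R A]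

noncomputable def signFlip (ε : σ → ℤˣ) : MvPolynomial σ R →ₐ[R] MvPolynomial σ R :=
  aeval fun j => ((ε j : ℤ) : MvPolynomial σ R) * X j

lemma aeval_signFlip (x : σ → A) (ε : σ → ℤˣ) (P : MvPolynomial σ R) :
    aeval x (signFlip ε P) = aeval (fun j => ((ε j : ℤ) : A) * x j) P := by
  rw [signFlip, comp_aeval_apply]
  simp

lemma signFlip_signFlip (ε ε' : σ → ℤˣ) (P : MvPolynomial σ R) :
    signFlip ε (signFlip ε' P) = signFlip (ε * ε') P := by
  simp only [signFlip, comp_aeval_apply, map_mul, map_intCast, aeval_X, Pi.mul_apply,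
    Units.val_mul, Int.cast_mul]
  congr 2 with j
  rw [mul_left_comm, mul_assoc]

lemma aeval_mem_of_even (S : Subalgebra R A) {x : σ → A} (hx : ∀ j, x j ^ 2 ∈ S)
    {P : MvPolynomial σ R} (hP : ∀ m ∈ P.support, ∀ j, Even (m j)) : aeval x P ∈ S := by
  rw [P.as_sum, map_sum]
  refine sum_mem fun m hm => ?_
  rw [aeval_monomial, Finsupp.prod]
  refine mul_mem (S.algebraMap_mem _) (prod_mem fun j _ => ?_)
  obtain ⟨k, hk⟩ := hP m hm j
  rw [hk, ← two_mul, pow_mul]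
  exact pow_mem (hx j) k

variable [Fintype σ]

lemma coeff_signFlip (ε : σ → ℤˣ) (m : σ →₀ ℕ) (P : MvPolynomial σ R) :
    coeff m (signFlip ε P) = ((∏ j, (ε j : ℤ) ^ m j : ℤ) : R) * coeff m P := by
  classical
  induction P using MvPolynomial.induction_on' with
  | monomial n a =>
    have : signFlip ε (monomial n a) =
        monomial n (((∏ j, (ε j : ℤ) ^ n j : ℤ) : R) * a) := by
      rw [signFlip, aeval_monomial, monomial_eq, Finsupp.prod_fintype _ _ (by simp),
        Finsupp.prod_fintype _ _ (by simp)]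
      simp only [mul_pow, Finset.prod_mul_distrib, algebraMap_eq, C_mul, Int.cast_prod,
        Int.cast_pow, map_prod, map_pow, map_intCast]
      ring
    rw [this, coeff_monomial, coeff_monomial]
    split_ifs with h
    · rw [h]
    · rw [mul_zero]
  | add P Q hP hQ => rw [map_add, coeff_add, coeff_add, hP, hQ, mul_add]

variable [DecidableEq σ]

lemma even_of_mem_support_of_forall_signFlip_eq [NoZeroDivisors R] [CharZero R]
    {P : MvPolynomial σ R} (hP : ∀ ε, signFlip ε P = P)
    {m : σ →₀ ℕ} (hm : m ∈ P.support) (j : σ) : Even (m j) := by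
  by_contra hodd
  have hflip := congr_arg (coeff m) (hP (Pi.mulSingle j (-1)))
  have hsign : ∏ i, (((Pi.mulSingle j (-1) : σ → ℤˣ) i : ℤˣ) : ℤ) ^ m i = -1 := by
    rw [Finset.prod_eq_single j (fun i _ hi => by simp [Pi.mulSingle_eq_of_ne hi]) (by simp),
      Pi.mulSingle_eq_same, Units.val_neg, Units.val_one,
      (Nat.not_even_iff_odd.1 hodd).neg_one_pow]
  rw [coeff_signFlip, hsign, Int.cast_neg, Int.cast_one, neg_one_mul,
    CharZero.neg_eq_self_iff] at hflip
  exact mem_support_iff.1 hm hflip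

noncomputable def signNorm (P : MvPolynomial σ R) : MvPolynomial σ R :=
  ∏ ε : σ → ℤˣ, signFlip ε P

lemma signFlip_signNorm (δ : σ → ℤˣ) (P : MvPolynomial σ R) :
    signFlip δ (signNorm P) = signNorm P := by
  simp only [signNorm, map_prod, signFlip_signFlip]
  exact Fintype.prod_equiv (Equiv.mulLeft δ) _ _ fun _ => rfl

lemma aeval_signNorm (x : σ → A) (P : MvPolynomial σ R) :
    aeval x (signNorm P) = ∏ ε : σ → ℤˣ, aeval (fun j => ((ε j : ℤ) : A) * x j) P := by
  simp only [signNorm, map_prod, aeval_signFlip]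

lemma aeval_signNorm_mem [NoZeroDivisors R] [CharZero R] (S : Subalgebra R A) {x : σ → A}
    (hx : ∀ j, x j ^ 2 ∈ S) (P : MvPolynomial σ R) : aeval x (signNorm P) ∈ S :=
  aeval_mem_of_even S hx fun _ hm =>
    even_of_mem_support_of_forall_signFlip_eq (fun δ => signFlip_signNorm δ P) hm

end SignFlip

noncomputable def subsetSumPoly {σ : Type*} [Fintype σ] [DecidableEq σ] (c : (σ → Bool) → ℤ) :
    MvPolynomial σ ℤ :=
  ∑ s, C (c s) * ∏ j, if s j then X j else 1

lemma aeval_subsetSumPoly_signed_sqrt {τ : ℕ} (c : (Fin τ → Bool) → ℤ) (ε : Fin τ → ℤˣ) :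
    aeval (fun j => ((ε j : ℤ) : ℝ) * √(nthPrime j : ℝ)) (subsetSumPoly c) =
      ∑ s, ((c s * (∏ j, if s j then ε j else 1 : ℤˣ) : ℤ) : ℝ) * √(sqfDiv τ s : ℝ) := by
  simp only [subsetSumPoly, map_sum, map_mul, map_prod, apply_ite (aeval _), aeval_X,
    map_one, sqrt_sqfDiv, Int.cast_mul, Units.coe_prod, Int.cast_prod, mul_assoc,
    ← Finset.prod_mul_distrib]
  refine Finset.sum_congr rfl fun s _ => ?_
  rw [aeval_C, algebraMap_int_eq, eq_intCast]
  refine congrArg _ (Finset.prod_congr rfl fun j _ => ?_)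
  split_ifs <;> simp

lemma abs_aeval_subsetSumPoly_le {τ : ℕ} {c : (Fin τ → Bool) → ℤ} {b : ℝ}
    (hc : ∀ s, |(c s : ℝ)| ≤ b) (ε : Fin τ → ℤˣ) :
    |aeval (fun j => ((ε j : ℤ) : ℝ) * √(nthPrime j : ℝ)) (subsetSumPoly c)| ≤
      b * ∑ s, √(sqfDiv τ s : ℝ) := by
  rw [aeval_subsetSumPoly_signed_sqrt, Finset.mul_sum]
  refine (Finset.abs_sum_le_sum_abs _ _).trans (Finset.sum_le_sum fun s _ => ?_)
  rw [abs_mul, Int.cast_mul, abs_mul, abs_unit_intCast, mul_one, abs_of_nonneg (Real.sqrt_nonneg _)]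
  exact mul_le_mul_of_nonneg_right (hc s) (Real.sqrt_nonneg _)

lemma sum_mul_sqrt_sqfDiv_ne_intCast {τ : ℕ} {c : (Fin τ → Bool) → ℤ}
    (hc0 : c (fun _ => false) = 0) (hc : c ≠ 0) (d : ℤ) :
    ∑ s, (c s : ℝ) * √(sqfDiv τ s : ℝ) ≠ d := by
  intro h
  have hbot : sqfDiv τ (fun _ => false) = 1 := by simp [sqfDiv]
  have hcd := Fintype.linearIndependent_iff.1
    ((linearIndependent_sqrt_sqfDiv τ).restrict_scalars' ℤ) (c - Pi.single (fun _ => false) d)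
    (by simp [sub_smul, Finset.sum_sub_distrib, h, hbot, Pi.single_apply])
  have hd : d = 0 := by simpa [hc0] using (hcd fun _ => false).symm
  exact hc (funext fun s => by simpa [hd] using hcd s)

lemma aeval_subsetSumPoly_sub_C_ne_zero {τ : ℕ} {c : (Fin τ → Bool) → ℤ}
    (hc0 : c (fun _ => false) = 0) (hc : c ≠ 0) (d : ℤ) (ε : Fin τ → ℤˣ) :
    aeval (fun j => ((ε j : ℤ) : ℝ) * √(nthPrime j : ℝ)) (subsetSumPoly c - C d) ≠ 0 := by
  rw [map_sub, aeval_C, algebraMap_int_eq, eq_intCast, aeval_subsetSumPoly_signed_sqrt,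
    sub_ne_zero]
  refine sum_mul_sqrt_sqfDiv_ne_intCast (by simp [hc0]) (fun h => hc (funext fun s => ?_)) d
  exact (Units.mul_left_eq_zero _).1 (congr_fun h s)

lemma inv_pow_le_abs_of_prod_eq_intCast {ι : Type*} [Fintype ι] [DecidableEq ι] {y : ι → ℝ}
    {B : ℝ} (hB : 0 < B) (i : ι) (hint : ∃ k : ℤ, ∏ j, y j = k) (hne : ∀ j, y j ≠ 0)
    (hle : ∀ j ≠ i, |y j| ≤ B) : (B ^ (Fintype.card ι - 1))⁻¹ ≤ |y i| := by
  obtain ⟨k, hk⟩ := hint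
  have hk0 : k ≠ 0 := by
    rintro rfl
    exact Finset.prod_ne_zero_iff.2 (fun j _ => hne j) (by exact_mod_cast hk)
  rw [inv_le_iff_one_le_mul₀ (pow_pos hB _)]
  calc (1 : ℝ) ≤ |(k : ℝ)| := by exact_mod_cast Int.one_le_abs hk0
    _ = |y i| * ∏ j ∈ Finset.univ.erase i, |y j| := by
      rw [← hk, ← Finset.mul_prod_erase _ _ (Finset.mem_univ i), abs_mul, Finset.abs_prod]
    _ ≤ |y i| * B ^ (Fintype.card ι - 1) := by
      rw [← Finset.card_univ, ← Finset.card_erase_of_mem (Finset.mem_univ i),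
        ← Finset.prod_const]
      exact mul_le_mul_of_nonneg_left (Finset.prod_le_prod (fun _ _ => abs_nonneg _)
        fun j hj => hle j (Finset.ne_of_mem_erase hj)) (abs_nonneg _)

lemma exists_prod_aeval_signed_sqrt_eq_intCast {τ : ℕ} (P : MvPolynomial (Fin τ) ℤ) :
    ∃ k : ℤ, ∏ ε : Fin τ → ℤˣ, aeval (fun j => ((ε j : ℤ) : ℝ) * √(nthPrime j : ℝ)) P = k := by
  obtain ⟨k, hk⟩ := Algebra.mem_bot.1 (aeval_signNorm_mem (⊥ : Subalgebra ℤ ℝ)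
    (x := fun j : Fin τ => √(nthPrime j : ℝ)) (fun j => Algebra.mem_bot.2 ⟨nthPrime j, by simp⟩) P)
  exact ⟨k, by rw [← aeval_signNorm, ← hk, algebraMap_int_eq, eq_intCast]⟩

lemma abs_round_le {α : Type*} [Field α] [LinearOrder α] [IsStrictOrderedRing α] [FloorRing α]
    (x : α) : |(round x : α)| ≤ |x| + 1 / 2 := by
  have := abs_sub_round x
  rw [abs_le] at *
  constructor <;> linarith [neg_abs_le x, le_abs_self x]

theorem stmt_13 (τ : ℕ) :
    ∃ cτ : ℝ, 0 < cτ ∧ ∀ n : ℕ, 1 ≤ n → ∀ c : (Fin τ → Bool) → ℤ,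
      c (fun _ => false) = 0 →
      (∀ s, |c s| ≤ (n : ℤ)) →
      (∑ s, (c s : ℝ) * Real.sqrt (sqfDiv τ s)) ≠ 0 →
      cτ * (n : ℝ) ^ (-(2 ^ τ - 1 : ℤ)) ≤
        distNearestInt (∑ s, (c s : ℝ) * Real.sqrt (sqfDiv τ s)) := by
  set M := ∑ s : Fin τ → Bool, √(sqfDiv τ s : ℝ)
  have hM : 0 ≤ M := Finset.sum_nonneg fun _ _ => Real.sqrt_nonneg _
  refine ⟨(2 * M + 1) ^ (-(2 ^ τ - 1 : ℤ)), by positivity, fun n hn c hc0 hcn hw => ?_⟩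
  set w := ∑ s, (c s : ℝ) * √(sqfDiv τ s : ℝ)
  have hn' : (1 : ℝ) ≤ n := by exact_mod_cast hn
  have hc : c ≠ 0 := by rintro rfl; simp [w] at hw
  set x : (Fin τ → ℤˣ) → Fin τ → ℝ := fun ε j => ((ε j : ℤ) : ℝ) * √(nthPrime j : ℝ)
  have hconj : ∀ ε, |aeval (x ε) (subsetSumPoly c)| ≤ n * M :=
    abs_aeval_subsetSumPoly_le fun s => by exact_mod_cast hcn s
  have hw1 : aeval (x 1) (subsetSumPoly c) = w := by
    simp only [x]
    rw [aeval_subsetSumPoly_signed_sqrt]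
    simp [w]
  have key := inv_pow_le_abs_of_prod_eq_intCast (B := n * (2 * M + 1)) (by positivity) 1
    (exists_prod_aeval_signed_sqrt_eq_intCast _) (aeval_subsetSumPoly_sub_C_ne_zero hc0 hc _)
    fun ε _ => by
      rw [map_sub, aeval_C, algebraMap_int_eq, eq_intCast]
      linarith [abs_sub (aeval (x ε) (subsetSumPoly c)) (round w : ℝ), hconj ε, abs_round_le w,
        hw1 ▸ hconj 1]
  rw [map_sub, hw1, aeval_C, algebraMap_int_eq, eq_intCast] at key
  have hexp : (-(2 ^ τ - 1 : ℤ)) = -((Fintype.card (Fin τ → ℤˣ) - 1 : ℕ) : ℤ) := by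
    simp [Fintype.card_units_int, Nat.cast_sub Nat.one_le_two_pow]
  rw [distNearestInt, hexp, zpow_neg, zpow_neg, zpow_natCast, zpow_natCast, ← mul_inv, ← mul_pow,
    mul_comm]
  exact key
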